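/- Let E be a regular-oriented word equation L = R. Then the control structure of the counter system CA(E) is flat (every control state lies on at most one simple cycle); moreover every simple cycle in CA(E) is 1-variable-reducing, i.e., there is a single variable y such that every transition on the cycle is a (P2)/(P3)/(P4) step whose counter update is DEC_y or SUB_{y,z} for some z ≠ y; and the length of every simple cycle is at most max(|L|, |R|) − 1. -/

import Mathlib

namespace WordEq

variable {A V : Type*}

/-- A word over the alphabet of constants `A` and variables `V`. -/
abbrev Word (A V : Type*) := List (A ⊕ V)

/-- A word equation `L = R`, given as the pair `(L, R)`. -/
abbrev Equation (A V : Type*) := Word A V × Word A V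

/-- Substitute the word `r` for every occurrence of the variable `x` in `w`. -/
def substVar [DecidableEq V] (x : V) (r : Word A V) (w : Word A V) : Word A V :=
  w.flatMap fun s =>
    match s with
    | Sum.inl a => [Sum.inl a]
    | Sum.inr y => if y = x then r else [Sum.inr y]

/-- The number of occurrences of the variable `x` in the equation `E`
(counting both sides). -/
def varCount [DecidableEq A] [DecidableEq V] (E : Equation A V) (x : V) : ℕ :=
  (E.1 ++ E.2).count (Sum.inr x)

/-- An equation is quadratic if every variable occurs at most twice. -/
def Quadratic [DecidableEq A] [DecidableEq V] (E : Equation A V) : Prop :=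
  ∀ x : V, varCount E x ≤ 2

/-- Apply a substitution (a map from variables to constant words) to a word,
i.e. the unique monoid homomorphism `(A ∪ V)* → A*` extending `σ` and fixing
every constant. -/
def applySub (σ : V → List A) (w : Word A V) : List A :=
  w.flatMap fun s =>
    match s with
    | Sum.inl a => [a]
    | Sum.inr x => σ x

/-- `σ` is a solution of the word equation `E`. -/
def IsSolution (σ : V → List A) (E : Equation A V) : Prop :=
  applySub σ E.1 = applySub σ E.2

/-- The length `|E| = |L| + |R|` of a word equation. -/
def eqLen (E : Equation A V) : ℕ := E.1.length + E.2.length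

/-- The Nielsen transformation (Levi's method) rewriting relation on word
equations.  The rules `p1`–`p4` remove a nonempty prefix from an equation
`α·w₁ = β·w₂`; the rules `eraseL`/`eraseR` erase a variable that is guessed to
denote the empty word (substituting `ε` for it everywhere). -/
inductive Nielsen [DecidableEq V] : Equation A V → Equation A V → Prop
  | eraseL (x : V) (w₁ w₂ : Word A V) :
      Nielsen (Sum.inr x :: w₁, w₂) (substVar x [] w₁, substVar x [] w₂)
  | eraseR (w₁ : Word A V) (x : V) (w₂ : Word A V) :
      Nielsen (w₁, Sum.inr x :: w₂) (substVar x [] w₁, substVar x [] w₂)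
  | p1 (α : A ⊕ V) (w₁ w₂ : Word A V) :
      Nielsen (α :: w₁, α :: w₂) (w₁, w₂)
  | p2 (a : A) (y : V) (w₁ w₂ : Word A V) :
      Nielsen (Sum.inl a :: w₁, Sum.inr y :: w₂)
        (substVar y [Sum.inl a, Sum.inr y] w₁,
          Sum.inr y :: substVar y [Sum.inl a, Sum.inr y] w₂)
  | p3 (x : V) (a : A) (w₁ w₂ : Word A V) :
      Nielsen (Sum.inr x :: w₁, Sum.inl a :: w₂)
        (Sum.inr x :: substVar x [Sum.inl a, Sum.inr x] w₁,
          substVar x [Sum.inl a, Sum.inr x] w₂)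
  | p4L (x y : V) (hxy : x ≠ y) (w₁ w₂ : Word A V) :
      Nielsen (Sum.inr x :: w₁, Sum.inr y :: w₂)
        (substVar y [Sum.inr x, Sum.inr y] w₁,
          Sum.inr y :: substVar y [Sum.inr x, Sum.inr y] w₂)
  | p4R (x y : V) (hxy : x ≠ y) (w₁ w₂ : Word A V) :
      Nielsen (Sum.inr x :: w₁, Sum.inr y :: w₂)
        (Sum.inr x :: substVar x [Sum.inr y, Sum.inr x] w₁,
          substVar x [Sum.inr y, Sum.inr x] w₂)

/-- The transition relation of the counter system `CA(E)` associated with a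
word equation: configurations are pairs of an equation (a control state) and a
valuation of the counters (one counter per variable, standing for the length
of that variable).  Each Nielsen step induces a transition with the
corresponding Presburger guard/update on the counters. -/
inductive CStep [DecidableEq V] :
    Equation A V × (V → ℕ) → Equation A V × (V → ℕ) → Prop
  | eraseL (x : V) (w₁ w₂ : Word A V) (v : V → ℕ) (hx : v x = 0) :
      CStep ((Sum.inr x :: w₁, w₂), v) ((substVar x [] w₁, substVar x [] w₂), v)
  | eraseR (w₁ : Word A V) (x : V) (w₂ : Word A V) (v : V → ℕ) (hx : v x = 0) :
      CStep ((w₁, Sum.inr x :: w₂), v) ((substVar x [] w₁, substVar x [] w₂), v)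
  | p1 (α : A ⊕ V) (w₁ w₂ : Word A V) (v : V → ℕ) :
      CStep ((α :: w₁, α :: w₂), v) ((w₁, w₂), v)
  | p2 (a : A) (y : V) (w₁ w₂ : Word A V) (v : V → ℕ) (hy : 0 < v y) :
      CStep ((Sum.inl a :: w₁, Sum.inr y :: w₂), v)
        ((substVar y [Sum.inl a, Sum.inr y] w₁,
          Sum.inr y :: substVar y [Sum.inl a, Sum.inr y] w₂),
          Function.update v y (v y - 1))
  | p3 (x : V) (a : A) (w₁ w₂ : Word A V) (v : V → ℕ) (hx : 0 < v x) :
      CStep ((Sum.inr x :: w₁, Sum.inl a :: w₂), v)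
        ((Sum.inr x :: substVar x [Sum.inl a, Sum.inr x] w₁,
          substVar x [Sum.inl a, Sum.inr x] w₂),
          Function.update v x (v x - 1))
  | p4L (x y : V) (hxy : x ≠ y) (w₁ w₂ : Word A V) (v : V → ℕ)
      (h₁ : 0 < v x) (h₂ : v x ≤ v y) :
      CStep ((Sum.inr x :: w₁, Sum.inr y :: w₂), v)
        ((substVar y [Sum.inr x, Sum.inr y] w₁,
          Sum.inr y :: substVar y [Sum.inr x, Sum.inr y] w₂),
          Function.update v y (v y - v x))
  | p4R (x y : V) (hxy : x ≠ y) (w₁ w₂ : Word A V) (v : V → ℕ)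
      (h₁ : 0 < v y) (h₂ : v y ≤ v x) :
      CStep ((Sum.inr x :: w₁, Sum.inr y :: w₂), v)
        ((Sum.inr x :: substVar x [Sum.inr y, Sum.inr x] w₁,
          substVar x [Sum.inr y, Sum.inr x] w₂),
          Function.update v x (v x - v y))

/-- A word equation is regular if each variable occurs at most once on each
side. -/
def Regular [DecidableEq A] [DecidableEq V] (E : Equation A V) : Prop :=
  ∀ x : V, E.1.count (Sum.inr x) ≤ 1 ∧ E.2.count (Sum.inr x) ≤ 1

/-- On the word `w`, the variables occur in `lt`-increasing order. -/
def SideOrdered (lt : V → V → Prop) (w : Word A V) : Prop :=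
  ∀ (w₁ w₂ w₃ : Word A V) (α β : V),
    w = w₁ ++ Sum.inr α :: w₂ ++ Sum.inr β :: w₃ → lt α β

/-- A word equation is oriented if there is a strict total order on the
variables such that on each side the variables occur in increasing order. -/
def Oriented (E : Equation A V) : Prop :=
  ∃ lt : V → V → Prop,
    IsStrictTotalOrder V lt ∧ SideOrdered lt E.1 ∧ SideOrdered lt E.2

/-- A regular-oriented word equation. -/
def RegularOriented [DecidableEq A] [DecidableEq V] (E : Equation A V) : Prop :=
  Regular E ∧ Oriented E

/-- A simple cycle in the control structure of the counter system `CA(E)`: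
a nonempty list of pairwise distinct control states (equations reachable from
`E`), each of which has a Nielsen transition to the cyclically next one. -/
def IsSimpleCycle [DecidableEq V] (E : Equation A V)
    (l : List (Equation A V)) : Prop :=
  l ≠ [] ∧ l.Nodup ∧ (∀ s ∈ l, Relation.ReflTransGen Nielsen E s) ∧
    ∀ i : Fin l.length,
      Nielsen (l.get i) (l.get ⟨((i : ℕ) + 1) % l.length, Nat.mod_lt _ i.pos⟩)


/-!
Regularity together with the absence of crossing pairs of variables (which orientation provides)
is preserved by Nielsen steps, and no step lengthens a side. Around a cycle the side lengths are
therefore constant, which forces every step to be a `(P2)`/`(P4)` step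
`σ·w₁ = y·w₂ ⇒ w₁[σy/y] = y·w₂[σy/y]` (or its mirror image) with `y` occurring in `w₁`: the side
headed by `y` stays fixed and `σ` moves to just before `y`. Noncrossing makes this successor
unique and makes the pivot `y` and the fixed side persist. Hence a state lies on at most one
cycle, every counter update on a cycle is `DEC_y` or `SUB_{y,z}`, and the moving side runs
through the rotations of the prefix in front of `y`, which bounds the length of the cycle.
-/

/- `List.count` on `A ⊕ V` (as in `Regular`) uses the derived `BEq` instance of `Sum`, which comes
without a `LawfulBEq` instance. -/
instance {α β : Type*} [BEq α] [LawfulBEq α] [BEq β] [LawfulBEq β] : LawfulBEq (α ⊕ β) where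
  eq_of_beq {a b} h := by
    cases a <;> cases b <;> first | cases h | simpa [BEq.beq, Sum.instBEq.beq] using h
  rfl {a} := by cases a <;> simp [BEq.beq, Sum.instBEq.beq]

lemma eq_of_succ_le_of_periodic {g : ℕ → ℕ} (hg : ∀ k, g (k + 1) ≤ g k) {n : ℕ} (hn : 0 < n)
    (hper : Function.Periodic g n) (k : ℕ) : g (k + 1) = g k := by
  refine le_antisymm (hg k) ?_
  calc g k = g (k + n) := (hper k).symm
    _ ≤ g (k + 1) := antitone_nat_of_succ_le hg (by omega)

section Lists

open List

variable {α : Type*}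

lemma append_cons_inj_of_notMem [DecidableEq α] {b : α} {p₁ p₂ s₁ s₂ : List α}
    (h : p₁ ++ b :: s₁ = p₂ ++ b :: s₂) (h₁ : b ∉ p₁) (h₂ : b ∉ p₂) : p₁ = p₂ ∧ s₁ = s₂ := by
  have hidx : ∀ {p s : List α}, b ∉ p → (p ++ b :: s).idxOf b = p.length := fun hp => by
    rw [List.idxOf_append_of_notMem hp, List.idxOf_cons_self, Nat.add_zero]
  have hlen : p₁.length = p₂.length := by rw [← hidx h₁, ← hidx h₂, h]
  simpa using List.append_inj h hlen

lemma pair_sublist_cons {a b : α} {w : List α} (h : b ∈ w) : [a, b] <+ a :: w :=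
  (List.singleton_sublist.2 h).cons_cons a

lemma exists_eq_append_of_pair_sublist {a b : α} {w : List α} (h : [a, b] <+ w) :
    ∃ w₁ w₂ w₃, w = w₁ ++ a :: w₂ ++ b :: w₃ := by
  obtain ⟨r₁, r₂, rfl, ha, hb⟩ := cons_sublist_iff.1 h
  obtain ⟨p, q, rfl⟩ := append_of_mem ha
  obtain ⟨q', t, rfl⟩ := append_of_mem (singleton_sublist.1 hb)
  exact ⟨p, q ++ q', t, by simp⟩

lemma notMem_of_count_cons_self_le_one [BEq α] [LawfulBEq α] {a : α} {w : List α}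
    (h : count a (a :: w) ≤ 1) : a ∉ w := by
  rw [count_cons_self] at h
  exact count_eq_zero.1 (by omega)

lemma exists_eq_append_cons_of_count_eq_one [BEq α] [LawfulBEq α] {a : α} {w : List α}
    (h : count a w = 1) : ∃ p s, w = p ++ a :: s ∧ a ∉ p ∧ a ∉ s := by
  obtain ⟨p, s, rfl⟩ := append_of_mem (count_pos_iff.1 (h ▸ Nat.one_pos))
  rw [count_append, count_cons_self] at h
  exact ⟨p, s, rfl, count_eq_zero.1 (by omega), count_eq_zero.1 (by omega)⟩

def MoveHeadBefore (b : α) (T T' : List α) : Prop :=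
  ∃ c p s, c ≠ b ∧ b ∉ p ∧ T = c :: (p ++ b :: s) ∧ T' = p ++ c :: b :: s

namespace MoveHeadBefore

variable {b : α} {T T' : List α}

lemma length_eq (h : MoveHeadBefore b T T') : T'.length = T.length := by
  obtain ⟨c, p, s, -, -, rfl, rfl⟩ := h
  simp only [length_cons, length_append]
  omega

lemma mem_left (h : MoveHeadBefore b T T') : b ∈ T := by
  obtain ⟨c, p, s, -, -, rfl, -⟩ := h
  simp

lemma mem_right (h : MoveHeadBefore b T T') : b ∈ T' := by
  obtain ⟨c, p, s, -, -, -, rfl⟩ := h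
  simp

lemma pair_sublist {a : α} {w : List α} (h : MoveHeadBefore b (a :: w) T') :
    a ≠ b ∧ [a, b] <+ a :: w := by
  obtain ⟨c, p, s, hc, -, hT, -⟩ := h
  obtain ⟨rfl, rfl⟩ := List.cons.inj hT
  exact ⟨hc, pair_sublist_cons (by simp)⟩

lemma unique [DecidableEq α] {T₁ T₂ : List α} (h₁ : MoveHeadBefore b T T₁)
    (h₂ : MoveHeadBefore b T T₂) : T₁ = T₂ := by
  obtain ⟨c, p, s, -, hp, rfl, rfl⟩ := h₁
  obtain ⟨c', p', s', -, hp', hT, rfl⟩ := h₂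
  obtain ⟨rfl, hsplit⟩ := List.cons.inj hT
  obtain ⟨rfl, rfl⟩ := append_cons_inj_of_notMem hsplit hp hp'
  rfl

lemma iterate [DecidableEq α] {T : ℕ → List α} (h : ∀ k, MoveHeadBefore b (T k) (T (k + 1)))
    {p s : List α} (h₀ : T 0 = p ++ b :: s) (hp : b ∉ p) (k : ℕ) :
    T k = p.rotate k ++ b :: s := by
  induction k with
  | zero => simpa using h₀
  | succ k ih =>
    obtain ⟨c, q, s', hc, hq, hT, hT'⟩ := h k
    have hcq : b ∉ c :: q := by simp [hq, Ne.symm hc]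
    obtain ⟨hrot, rfl⟩ := append_cons_inj_of_notMem (ih.symm.trans hT) (by simpa using hp) hcq
    rw [hT', ← List.rotate_rotate, hrot]
    simp

end MoveHeadBefore

end Lists

section CyclicGet

open List

variable {α : Type*} {l : List α}

def cyclicGet (l : List α) (hl : 0 < l.length) (k : ℕ) : α :=
  l.get ⟨k % l.length, Nat.mod_lt _ hl⟩

variable (hl : 0 < l.length)

lemma cyclicGet_mem (k : ℕ) : cyclicGet l hl k ∈ l := List.get_mem _ _

lemma periodic_cyclicGet : Function.Periodic (cyclicGet l hl) l.length := fun k => by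
  simp [cyclicGet]

lemma cyclicGet_of_lt {k : ℕ} (hk : k < l.length) : cyclicGet l hl k = l[k] := by
  simp [cyclicGet, Nat.mod_eq_of_lt hk]

lemma forall_get_iff_forall_cyclicGet (P : α → α → Prop) :
    (∀ i : Fin l.length, P (l.get i) (l.get ⟨((i : ℕ) + 1) % l.length, Nat.mod_lt _ i.pos⟩)) ↔
      ∀ k, P (cyclicGet l hl k) (cyclicGet l hl (k + 1)) := by
  refine ⟨fun h k => ?_, fun h i => ?_⟩
  · simpa [cyclicGet] using h ⟨k % l.length, Nat.mod_lt _ hl⟩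
  · simpa [cyclicGet, Nat.mod_eq_of_lt i.isLt] using h i

lemma length_dvd_of_cyclicGet_add_eq (hd : l.Nodup) {m i : ℕ}
    (h : cyclicGet l hl (m + i) = cyclicGet l hl i) : l.length ∣ m := by
  have hmod : m + i ≡ 0 + i [MOD l.length] := by
    rw [zero_add]; exact hd.getElem_inj_iff.1 h
  exact Nat.modEq_zero_iff_dvd.1 (Nat.ModEq.add_right_cancel' i hmod)

theorem isRotated_of_rightUnique {R : α → α → Prop} (hR : Relator.RightUnique R)
    {l₁ l₂ : List α} (hl₁ : 0 < l₁.length) (hl₂ : 0 < l₂.length) (hd₁ : l₁.Nodup)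
    (hd₂ : l₂.Nodup) (hc₁ : ∀ k, R (cyclicGet l₁ hl₁ k) (cyclicGet l₁ hl₁ (k + 1)))
    (hc₂ : ∀ k, R (cyclicGet l₂ hl₂ k) (cyclicGet l₂ hl₂ (k + 1))) {a : α} (ha₁ : a ∈ l₁)
    (ha₂ : a ∈ l₂) : l₁ ~r l₂ := by
  obtain ⟨i₁, hi₁, rfl⟩ := List.getElem_of_mem ha₁
  obtain ⟨i₂, hi₂, h₂⟩ := List.getElem_of_mem ha₂
  have hagree : ∀ k, cyclicGet l₁ hl₁ (k + i₁) = cyclicGet l₂ hl₂ (k + i₂) := by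
    intro k
    induction k with
    | zero => simp [cyclicGet_of_lt, hi₁, hi₂, h₂]
    | succ k ih =>
      rw [add_right_comm k 1 i₁, add_right_comm k 1 i₂]
      exact hR (hc₁ _) (ih ▸ hc₂ _)
  have hlen : l₁.length = l₂.length := by
    refine Nat.dvd_antisymm (length_dvd_of_cyclicGet_add_eq hl₁ hd₁ (i := i₁) ?_)
      (length_dvd_of_cyclicGet_add_eq hl₂ hd₂ (i := i₂) ?_)
    · calc cyclicGet l₁ hl₁ (l₂.length + i₁) = cyclicGet l₂ hl₂ (l₂.length + i₂) := hagree _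
        _ = cyclicGet l₂ hl₂ (0 + i₂) := by rw [add_comm, periodic_cyclicGet hl₂, zero_add]
        _ = cyclicGet l₁ hl₁ i₁ := by rw [← hagree, zero_add]
    · calc cyclicGet l₂ hl₂ (l₁.length + i₂) = cyclicGet l₁ hl₁ (l₁.length + i₁) := (hagree _).symm
        _ = cyclicGet l₁ hl₁ (0 + i₁) := by rw [add_comm, periodic_cyclicGet hl₁, zero_add]
        _ = cyclicGet l₂ hl₂ i₂ := by rw [hagree, zero_add]
  have hrot : l₁.rotate i₁ = l₂.rotate i₂ := by
    refine List.ext_getElem (by simp [hlen]) fun k hk₁ hk₂ => ?_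
    simpa [cyclicGet, hlen] using hagree k
  exact (IsRotated.forall l₁ i₁).symm.trans (hrot ▸ IsRotated.forall l₂ i₂)

end CyclicGet

section Substitution

open List

variable [DecidableEq V] {x : V} {r : Word A V}

@[simp] lemma substVar_append (w₁ w₂ : Word A V) :
    substVar x r (w₁ ++ w₂) = substVar x r w₁ ++ substVar x r w₂ := by
  simp [substVar]

variable [DecidableEq A]

lemma substVar_cons (d : A ⊕ V) (w : Word A V) :
    substVar x r (d :: w) = (if d = Sum.inr x then r else [d]) ++ substVar x r w := by
  rcases d with a | z
  · simp [substVar]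
  · by_cases hz : z = x <;> simp [substVar, hz]

lemma substVar_of_notMem {w : Word A V} (h : Sum.inr x ∉ w) : substVar x r w = w := by
  induction w with
  | nil => rfl
  | cons d w ih =>
    simp only [mem_cons, not_or] at h
    simp [substVar_cons, Ne.symm h.1, ih h.2]

lemma substVar_nil_sublist (w : Word A V) : substVar x [] w <+ w := by
  induction w with
  | nil => exact Sublist.slnil
  | cons d w ih =>
    rw [substVar_cons]
    split_ifs
    · exact ih.cons d
    · exact ih.cons_cons d

lemma mem_substVar {c : A ⊕ V} {w : Word A V} (h : c ∈ substVar x r w) :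
    c ∈ w ∨ (Sum.inr x ∈ w ∧ c ∈ r) := by
  induction w with
  | nil => simp [substVar] at h
  | cons d w ih =>
    rw [substVar_cons, mem_append] at h
    split_ifs at h with hd
    · rcases h with h | h
      · exact Or.inr ⟨hd ▸ mem_cons_self, h⟩
      · rcases ih h with h | h <;> simp [h]
    · rcases h with h | h
      · simp_all
      · rcases ih h with h | h <;> simp [h]

lemma count_substVar_pair {σ : A ⊕ V} (hσ : σ ≠ Sum.inr x) (c : A ⊕ V) (w : Word A V) :
    count c (substVar x [σ, Sum.inr x] w) =
      count c w + if c = σ then count (Sum.inr x) w else 0 := by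
  induction w with
  | nil => simp [substVar]
  | cons d w ih =>
    rw [substVar_cons, count_append, ih]
    by_cases hd : d = Sum.inr x <;> by_cases hc : c = σ <;>
      simp [hd, hc, count_cons, Ne.symm hσ] <;> grind

lemma sublist_of_pair_sublist_substVar {σ : A ⊕ V} (hσ : σ ≠ Sum.inr x) {a b : A ⊕ V}
    (ha : a ≠ σ) (hb : b ≠ σ) {w : Word A V} (h : [a, b] <+ substVar x [σ, Sum.inr x] w) :
    [a, b] <+ w := by
  have hfilter : ∀ w : Word A V,
      (substVar x [σ, Sum.inr x] w).filter (· ≠ σ) = w.filter (· ≠ σ) := by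
    intro w
    induction w with
    | nil => simp [substVar]
    | cons d w ih =>
      rw [substVar_cons, filter_append, ih]
      split_ifs with hd
      · simp [hd, Ne.symm hσ]
      · by_cases hdσ : d = σ <;> simp [hdσ]
  have hab := h.filter (· ≠ σ)
  rw [hfilter] at hab
  simp only [filter_cons, ne_eq, ha, hb, not_false_eq_true, decide_true, filter_nil] at hab
  exact hab.trans filter_sublist

end Substitution

section Invariant

open List

def Noncrossing (E : Equation A V) : Prop :=
  ∀ u v : V, [Sum.inr u, Sum.inr v] <+ E.1 → ¬ [Sum.inr v, Sum.inr u] <+ E.2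

lemma Noncrossing.swap {E : Equation A V} (h : Noncrossing E) : Noncrossing E.swap :=
  fun u v h₁ h₂ => h v u h₂ h₁

lemma Oriented.noncrossing {E : Equation A V} (h : Oriented E) : Noncrossing E := by
  obtain ⟨lt, hlt, hL, hR⟩ := h
  intro u v huv hvu
  obtain ⟨w₁, w₂, w₃, h₁⟩ := exists_eq_append_of_pair_sublist huv
  obtain ⟨w₁', w₂', w₃', h₂⟩ := exists_eq_append_of_pair_sublist hvu
  exact asymm (hL w₁ w₂ w₃ u v h₁) (hR w₁' w₂' w₃' v u h₂)

variable [DecidableEq A] [DecidableEq V]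

def RegularNoncrossing (E : Equation A V) : Prop := Regular E ∧ Noncrossing E

variable {s t : Equation A V}

lemma Regular.swap (h : Regular s) : Regular s.swap := fun x => (h x).symm

lemma RegularNoncrossing.swap (h : RegularNoncrossing s) : RegularNoncrossing s.swap :=
  ⟨h.1.swap, h.2.swap⟩

lemma RegularOriented.regularNoncrossing (h : RegularOriented s) : RegularNoncrossing s :=
  ⟨h.1, h.2.noncrossing⟩

lemma RegularNoncrossing.of_sublist (h : RegularNoncrossing s) (h₁ : t.1 <+ s.1)
    (h₂ : t.2 <+ s.2) : RegularNoncrossing t :=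
  ⟨fun z => ⟨(h₁.count_le _).trans (h.1 z).1, (h₂.count_le _).trans (h.1 z).2⟩,
    fun u v hu hv => h.2 u v (hu.trans h₁) (hv.trans h₂)⟩

end Invariant

section Steps

open List

variable [DecidableEq A] [DecidableEq V] {s t : Equation A V} {v v' : V → ℕ} {y : V}

/-- Steps that only delete letters: erasing and `(P1)`. -/
def ShrinkStep (s t : Equation A V) : Prop :=
  t.1 <+ s.1 ∧ t.2 <+ s.2 ∧ eqLen t < eqLen s

/-- The rules `(P2)` and `(P4)` (first variant); `(P3)` and the second variant of `(P4)` are their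
mirror images under `Prod.swap`. -/
def SubstStep (y : V) (s t : Equation A V) : Prop :=
  ∃ (σ : A ⊕ V) (w₁ w₂ : Word A V), σ ≠ Sum.inr y ∧ s = (σ :: w₁, Sum.inr y :: w₂) ∧
    t = (substVar y [σ, Sum.inr y] w₁, Sum.inr y :: substVar y [σ, Sum.inr y] w₂)

def DecreasesOnly (y : V) (v v' : V → ℕ) : Prop :=
  v' y < v y ∧ ∀ z : V, z ≠ y → v' z = v z

lemma decreasesOnly_update {d : ℕ} (hd : 0 < d) (hdy : d ≤ v y) :
    DecreasesOnly y v (Function.update v y (v y - d)) :=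
  ⟨by rw [Function.update_self]; omega, fun _ hz => Function.update_of_ne hz _ _⟩

lemma shrinkStep_erase (x : V) {w₁ w₂ : Word A V} (h₁ : w₁ <+ s.1) (h₂ : w₂ <+ s.2)
    (hlen : w₁.length + w₂.length < eqLen s) :
    ShrinkStep s (substVar x [] w₁, substVar x [] w₂) := by
  have k₁ := substVar_nil_sublist (x := x) w₁
  have k₂ := substVar_nil_sublist (x := x) w₂
  refine ⟨k₁.trans h₁, k₂.trans h₂, ?_⟩
  have := k₁.length_le
  have := k₂.length_le
  simp only [eqLen] at hlen ⊢
  omega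

lemma Nielsen.cases (h : Nielsen s t) :
    ShrinkStep s t ∨ (∃ y, SubstStep y s t) ∨ ∃ y, SubstStep y s.swap t.swap := by
  cases h with
  | eraseL x w₁ w₂ =>
    exact Or.inl (shrinkStep_erase x (sublist_cons_self _ _) (.refl _) (by simp [eqLen]))
  | eraseR w₁ x w₂ =>
    exact Or.inl (shrinkStep_erase x (.refl _) (sublist_cons_self _ _) (by simp [eqLen]))
  | p1 α w₁ w₂ =>
    exact Or.inl ⟨sublist_cons_self _ _, sublist_cons_self _ _, by simp only [eqLen, length_cons]; omega⟩
  | p2 a y w₁ w₂ => exact Or.inr (Or.inl ⟨y, _, w₁, w₂, by simp, rfl, rfl⟩)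
  | p3 x a w₁ w₂ => exact Or.inr (Or.inr ⟨x, _, w₂, w₁, by simp, rfl, rfl⟩)
  | p4L x y hxy w₁ w₂ => exact Or.inr (Or.inl ⟨y, _, w₁, w₂, by simpa, rfl, rfl⟩)
  | p4R x y hxy w₁ w₂ => exact Or.inr (Or.inr ⟨x, _, w₂, w₁, by simpa using hxy.symm, rfl, rfl⟩)

lemma CStep.cases (h : CStep (s, v) (t, v')) :
    ShrinkStep s t ∨ (∃ y, SubstStep y s t ∧ DecreasesOnly y v v') ∨
      ∃ y, SubstStep y s.swap t.swap ∧ DecreasesOnly y v v' := by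
  cases h with
  | eraseL x w₁ w₂ v hx =>
    exact Or.inl (shrinkStep_erase x (sublist_cons_self _ _) (.refl _) (by simp [eqLen]))
  | eraseR w₁ x w₂ v hx =>
    exact Or.inl (shrinkStep_erase x (.refl _) (sublist_cons_self _ _) (by simp [eqLen]))
  | p1 α w₁ w₂ v =>
    exact Or.inl ⟨sublist_cons_self _ _, sublist_cons_self _ _, by simp only [eqLen, length_cons]; omega⟩
  | p2 a y w₁ w₂ v hy =>
    exact Or.inr (Or.inl ⟨y, ⟨_, w₁, w₂, by simp, rfl, rfl⟩, decreasesOnly_update one_pos hy⟩)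
  | p3 x a w₁ w₂ v hx =>
    exact Or.inr (Or.inr ⟨x, ⟨_, w₂, w₁, by simp, rfl, rfl⟩, decreasesOnly_update one_pos hx⟩)
  | p4L x y hxy w₁ w₂ v h₁ h₂ =>
    exact Or.inr (Or.inl ⟨y, ⟨_, w₁, w₂, by simpa, rfl, rfl⟩, decreasesOnly_update h₁ h₂⟩)
  | p4R x y hxy w₁ w₂ v h₁ h₂ =>
    exact Or.inr (Or.inr ⟨x, ⟨_, w₂, w₁, by simpa using hxy.symm, rfl, rfl⟩,
      decreasesOnly_update h₁ h₂⟩)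

end Steps

namespace SubstStep

open List

variable [DecidableEq A] [DecidableEq V] {s t : Equation A V} {y : V}

lemma snd_eq (h : SubstStep y s t) (hs : Regular s) : t.2 = s.2 := by
  obtain ⟨σ, w₁, w₂, -, rfl, rfl⟩ := h
  simp [substVar_of_notMem (notMem_of_count_cons_self_le_one (hs y).2)]

lemma length_fst_lt_or_move (h : SubstStep y s t) (hs : Regular s) :
    t.1.length < s.1.length ∨ MoveHeadBefore (Sum.inr y) s.1 t.1 := by
  obtain ⟨σ, w₁, w₂, hσ, rfl, rfl⟩ := h
  have hcount : count (Sum.inr y) w₁ ≤ 1 := count_le_count_cons.trans (hs y).1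
  rcases Nat.le_one_iff_eq_zero_or_eq_one.1 hcount with h₀ | h₁
  · left
    simp [substVar_of_notMem (count_eq_zero.1 h₀)]
  · right
    obtain ⟨p, r, rfl, hp, hr⟩ := exists_eq_append_cons_of_count_eq_one h₁
    exact ⟨σ, p, r, hσ, hp, rfl, by
      simp [substVar_cons, substVar_of_notMem hp, substVar_of_notMem hr]⟩

lemma length_le (h : SubstStep y s t) (hs : Regular s) :
    t.1.length ≤ s.1.length ∧ t.2.length ≤ s.2.length := by
  refine ⟨?_, (congrArg length (h.snd_eq hs)).le⟩
  rcases h.length_fst_lt_or_move hs with hlt | hm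
  exacts [hlt.le, hm.length_eq.le]

lemma regularNoncrossing (h : SubstStep y s t) (hs : RegularNoncrossing s) :
    RegularNoncrossing t := by
  obtain ⟨σ, w₁, w₂, hσ, rfl, rfl⟩ := h
  have hy₂ : Sum.inr y ∉ w₂ := notMem_of_count_cons_self_le_one (hs.1 y).2
  rw [substVar_of_notMem hy₂]
  refine ⟨fun z => ⟨?_, (hs.1 z).2⟩, fun u v huv hvu => ?_⟩
  · have hz := (hs.1 z).1
    have hy := (hs.1 y).1
    rw [count_substVar_pair hσ]
    simp only [count_cons] at hz hy
    split_ifs at hz hy ⊢ <;> simp_all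
  · -- a crossing pair created by the substitution involves `σ`, which then crosses `y` in `s`
    have hσ_cross : ∀ x, σ = Sum.inr x → Sum.inr x ∈ substVar y [σ, Sum.inr y] w₁ →
        Sum.inr x ∈ Sum.inr y :: w₂ → False := by
      rintro x rfl h₁ h₂
      have hx₁ : Sum.inr x ∉ w₁ := notMem_of_count_cons_self_le_one (hs.1 x).1
      have hy₁ : Sum.inr y ∈ w₁ := by
        rcases mem_substVar h₁ with h | h
        · exact absurd h hx₁
        · exact h.1
      have hx₂ : Sum.inr x ∈ w₂ := (mem_cons.1 h₂).resolve_left hσ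
      exact hs.2 x y (pair_sublist_cons hy₁) (pair_sublist_cons hx₂)
    by_cases hu : σ = Sum.inr u
    · exact hσ_cross u hu (huv.subset (by simp)) (hvu.subset (by simp))
    by_cases hv : σ = Sum.inr v
    · exact hσ_cross v hv (huv.subset (by simp)) (hvu.subset (by simp))
    exact hs.2 u v ((sublist_of_pair_sublist_substVar hσ (Ne.symm hu) (Ne.symm hv) huv).cons σ) hvu

end SubstStep

section Nielsen

open List

variable [DecidableEq V] {E s t : Equation A V} {v v' : V → ℕ}

lemma Nielsen.swap (h : Nielsen s t) : Nielsen s.swap t.swap := by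
  cases h with
  | eraseL x w₁ w₂ => exact .eraseR _ x _
  | eraseR w₁ x w₂ => exact .eraseL x _ _
  | p1 α w₁ w₂ => exact .p1 α w₂ w₁
  | p2 a y w₁ w₂ => exact .p3 y a w₂ w₁
  | p3 x a w₁ w₂ => exact .p2 a x w₂ w₁
  | p4L x y hxy w₁ w₂ => exact .p4R y x hxy.symm w₂ w₁
  | p4R x y hxy w₁ w₂ => exact .p4L y x hxy.symm w₂ w₁

lemma CStep.swap (h : CStep (s, v) (t, v')) : CStep (s.swap, v) (t.swap, v') := by
  cases h with
  | eraseL x w₁ w₂ v hx => exact .eraseR _ x _ _ hx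
  | eraseR w₁ x w₂ v hx => exact .eraseL x _ _ _ hx
  | p1 α w₁ w₂ v => exact .p1 α w₂ w₁ v
  | p2 a y w₁ w₂ v hy => exact .p3 y a w₂ w₁ v hy
  | p3 x a w₁ w₂ v hx => exact .p2 a x w₂ w₁ v hx
  | p4L x y hxy w₁ w₂ v h₁ h₂ => exact .p4R y x hxy.symm w₂ w₁ v h₁ h₂
  | p4R x y hxy w₁ w₂ v h₁ h₂ => exact .p4L y x hxy.symm w₂ w₁ v h₁ h₂

variable [DecidableEq A]

lemma Nielsen.regularNoncrossing (h : Nielsen s t) (hs : RegularNoncrossing s) :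
    RegularNoncrossing t := by
  rcases h.cases with h | ⟨y, h⟩ | ⟨y, h⟩
  · exact hs.of_sublist h.1 h.2.1
  · exact h.regularNoncrossing hs
  · exact (h.regularNoncrossing hs.swap).swap

lemma Nielsen.length_le (h : Nielsen s t) (hs : Regular s) :
    t.1.length ≤ s.1.length ∧ t.2.length ≤ s.2.length := by
  rcases h.cases with h | ⟨y, h⟩ | ⟨y, h⟩
  · exact ⟨h.1.length_le, h.2.1.length_le⟩
  · exact h.length_le hs
  · exact (h.length_le hs.swap).symm

lemma regularNoncrossing_and_length_le_of_reflTransGen (hE : RegularNoncrossing E)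
    (h : Relation.ReflTransGen Nielsen E s) :
    RegularNoncrossing s ∧ s.1.length ≤ E.1.length ∧ s.2.length ≤ E.2.length := by
  induction h with
  | refl => exact ⟨hE, le_rfl, le_rfl⟩
  | tail _ hst ih =>
    have hle := hst.length_le ih.1.1
    exact ⟨hst.regularNoncrossing ih.1, hle.1.trans ih.2.1, hle.2.trans ih.2.2⟩

end Nielsen

section CycleSteps

open List

variable {s t u : Equation A V} {v v' : V → ℕ} {y z : V}

def PivotStep (y : V) (s t : Equation A V) : Prop :=
  (∃ w, s.2 = Sum.inr y :: w) ∧ t.2 = s.2 ∧ MoveHeadBefore (Sum.inr y) s.1 t.1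

lemma not_pivotStep_swap (hs : Noncrossing s) (hhead : ∃ w, s.2 = Sum.inr y :: w)
    (hy : Sum.inr y ∈ s.1) (h : PivotStep z s.swap t.swap) : False := by
  obtain ⟨w, hw⟩ := hhead
  obtain ⟨⟨w', hw'⟩, -, hmove⟩ := h
  simp only [Prod.fst_swap, Prod.snd_swap] at hw' hmove
  rw [hw] at hmove
  obtain ⟨hyz, hyz_pair⟩ := hmove.pair_sublist
  rw [hw'] at hy
  exact hs z y (hw' ▸ pair_sublist_cons ((mem_cons.1 hy).resolve_left hyz))
    (hw ▸ hyz_pair)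

variable [DecidableEq A] [DecidableEq V]

def CycleStep (s t : Equation A V) : Prop :=
  RegularNoncrossing s ∧ Nielsen s t ∧ t.1.length = s.1.length ∧ t.2.length = s.2.length

lemma CycleStep.swap (h : CycleStep s t) : CycleStep s.swap t.swap :=
  ⟨h.1.swap, h.2.1.swap, h.2.2.2, h.2.2.1⟩

lemma SubstStep.pivotStep (h : SubstStep y s t) (hs : Regular s)
    (hlen : t.1.length = s.1.length) : PivotStep y s t := by
  refine ⟨?_, h.snd_eq hs, (h.length_fst_lt_or_move hs).resolve_left (by omega)⟩
  obtain ⟨σ, w₁, w₂, -, rfl, -⟩ := h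
  exact ⟨w₂, rfl⟩

lemma CycleStep.exists_pivotStep (h : CycleStep s t) :
    ∃ y, PivotStep y s t ∨ PivotStep y s.swap t.swap := by
  obtain ⟨hs, hst, h₁, h₂⟩ := h
  rcases hst.cases with hsh | ⟨y, hy⟩ | ⟨y, hy⟩
  · have := hsh.2.2
    simp only [eqLen] at this
    omega
  · exact ⟨y, .inl (hy.pivotStep hs.1 h₁)⟩
  · exact ⟨y, .inr (hy.pivotStep hs.1.swap h₂)⟩

lemma PivotStep.unique {t₁ t₂ : Equation A V} (h₁ : PivotStep y s t₁) (h₂ : PivotStep z s t₂) :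
    t₁ = t₂ := by
  obtain ⟨⟨w, hw⟩, ht₁, hm₁⟩ := h₁
  obtain ⟨⟨w', hw'⟩, ht₂, hm₂⟩ := h₂
  obtain rfl : y = z := Sum.inr.inj (List.head_eq_of_cons_eq (hw.symm.trans hw'))
  exact Prod.ext (hm₁.unique hm₂) (ht₁.trans ht₂.symm)

lemma rightUnique_cycleStep : Relator.RightUnique (CycleStep : Equation A V → _ → Prop) := by
  intro s t₁ t₂ h₁ h₂
  obtain ⟨y, hy | hy⟩ := h₁.exists_pivotStep <;> obtain ⟨z, hz | hz⟩ := h₂.exists_pivotStep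
  · exact hy.unique hz
  · exact (not_pivotStep_swap h₁.1.2 hy.1 hy.2.2.mem_left hz).elim
  · exact (not_pivotStep_swap h₁.1.2 hz.1 hz.2.2.mem_left hy).elim
  · exact Prod.swap_injective (hy.unique hz)

lemma PivotStep.pivotStep_of_cycleStep (h : PivotStep y s t) (ht : CycleStep t u) :
    PivotStep y t u := by
  have hhead : ∃ w, t.2 = Sum.inr y :: w := by rw [h.2.1]; exact h.1
  obtain ⟨z, hz | hz⟩ := ht.exists_pivotStep
  · obtain ⟨w, hw⟩ := hhead
    obtain ⟨w', hw'⟩ := hz.1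
    obtain rfl : z = y := Sum.inr.inj (List.head_eq_of_cons_eq (hw'.symm.trans hw))
    exact hz
  · exact (not_pivotStep_swap ht.1.2 hhead h.2.2.mem_right hz).elim

lemma PivotStep.decreasesOnly (h : PivotStep y s t) (hs : RegularNoncrossing s)
    (hc : CStep (s, v) (t, v')) : DecreasesOnly y v v' := by
  have hlen : t.1.length = s.1.length ∧ t.2.length = s.2.length :=
    ⟨h.2.2.length_eq, by rw [h.2.1]⟩
  rcases hc.cases with hsh | ⟨z, hz, hdec⟩ | ⟨z, hz, hdec⟩
  · have := hsh.2.2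
    simp only [eqLen] at this
    omega
  · obtain ⟨w, hw⟩ := h.1
    obtain ⟨σ, w₁, w₂, -, rfl, -⟩ := hz
    obtain rfl : z = y := Sum.inr.inj (List.head_eq_of_cons_eq hw)
    exact hdec
  · exact (not_pivotStep_swap hs.2 h.1 h.2.2.mem_left (hz.pivotStep hs.1.swap hlen.2)).elim

end CycleSteps

section Cycles

open List

variable [DecidableEq V] {E : Equation A V} {l : List (Equation A V)}

lemma IsSimpleCycle.length_le_of_cyclicGet_eq (hl : IsSimpleCycle E l) (hn : 0 < l.length)
    {m : ℕ} (hm : 0 < m) (h : cyclicGet l hn m = cyclicGet l hn 0) : l.length ≤ m :=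
  Nat.le_of_dvd hm (length_dvd_of_cyclicGet_add_eq hn hl.2.1 (i := 0) h)

variable [DecidableEq A] {f : ℕ → Equation A V} {y : V}

lemma forall_pivotStep (hf : ∀ k, CycleStep (f k) (f (k + 1)))
    (h₀ : PivotStep y (f 0) (f 1)) (k : ℕ) : PivotStep y (f k) (f (k + 1)) := by
  induction k with
  | zero => exact h₀
  | succ k ih => exact ih.pivotStep_of_cycleStep (hf (k + 1))

/-- Along a cycle of pivot steps the left-hand side `c·p·y·r` runs through the rotations of `c·p`,
so the cycle is no longer than `c·p`. -/
lemma length_lt_of_forall_pivotStep (h : ∀ k, PivotStep y (f k) (f (k + 1))) {n : ℕ}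
    (hn : ∀ m, 0 < m → f m = f 0 → n ≤ m) : n < (f 0).1.length := by
  obtain ⟨-, -, c, p, r, hc, hp, h₀, -⟩ := h 0
  have hsnd : ∀ k, (f k).2 = (f 0).2 := by
    intro k
    induction k with
    | zero => rfl
    | succ k ih => exact (h k).2.1.trans ih
  have hfst := MoveHeadBefore.iterate (fun k => (h k).2.2) (p := c :: p) h₀
    (by simp [hp, Ne.symm hc])
  have hret : f (c :: p).length = f 0 :=
    Prod.ext (by rw [hfst, hfst 0, rotate_length, rotate_zero]) (hsnd _)
  have := hn _ (by simp) hret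
  rw [h₀]
  simp only [length_cons, length_append] at this ⊢
  omega

lemma exists_decreasesOnly_of_forall_cycleStep (hf : ∀ k, CycleStep (f k) (f (k + 1))) {n : ℕ}
    (hn : ∀ m, 0 < m → f m = f 0 → n ≤ m) :
    ∃ y, (∀ k v v', CStep (f k, v) (f (k + 1), v') → DecreasesOnly y v v') ∧
      (n < (f 0).1.length ∨ n < (f 0).2.length) := by
  obtain ⟨y, h₀ | h₀⟩ := (hf 0).exists_pivotStep
  · have hp := forall_pivotStep hf h₀
    exact ⟨y, fun k v v' hc => (hp k).decreasesOnly (hf k).1 hc,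
      .inl (length_lt_of_forall_pivotStep hp hn)⟩
  · have hp := forall_pivotStep (f := fun k => (f k).swap) (fun k => (hf k).swap) h₀
    exact ⟨y, fun k v v' hc => (hp k).decreasesOnly (hf k).1.swap hc.swap,
      .inr (length_lt_of_forall_pivotStep hp fun m hm h => hn m hm (Prod.swap_injective h))⟩

lemma IsSimpleCycle.cycleStep (hE : RegularNoncrossing E) (hl : IsSimpleCycle E l)
    (hn : 0 < l.length) (k : ℕ) : CycleStep (cyclicGet l hn k) (cyclicGet l hn (k + 1)) := by
  have hrn : ∀ k, RegularNoncrossing (cyclicGet l hn k) := fun k =>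
    (regularNoncrossing_and_length_le_of_reflTransGen hE (hl.2.2.1 _ (cyclicGet_mem hn k))).1
  have hstep := (forall_get_iff_forall_cyclicGet hn Nielsen).1 hl.2.2.2
  have hle := fun k => (hstep k).length_le (hrn k).1
  have hper := periodic_cyclicGet hn
  exact ⟨hrn k, hstep k,
    eq_of_succ_le_of_periodic (fun k => (hle k).1) hn (hper.comp fun s => s.1.length) k,
    eq_of_succ_le_of_periodic (fun k => (hle k).2) hn (hper.comp fun s => s.2.length) k⟩

end Cycles

theorem regularOriented_flat_general
    [DecidableEq A] [DecidableEq V]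
    (E : Equation A V) (hro : RegularOriented E) :
    (∀ l₁ l₂ : List (Equation A V),
        IsSimpleCycle E l₁ → IsSimpleCycle E l₂ →
        ∀ s, s ∈ l₁ → s ∈ l₂ → ∃ k, l₂ = l₁.rotate k) ∧
    (∀ l : List (Equation A V), IsSimpleCycle E l →
        (∃ y : V, ∀ (i : Fin l.length) (v v' : V → ℕ),
            CStep (l.get i, v)
              (l.get ⟨((i : ℕ) + 1) % l.length, Nat.mod_lt _ i.pos⟩, v') →
              v' y < v y ∧ ∀ z : V, z ≠ y → v' z = v z) ∧
        l.length ≤ max E.1.length E.2.length - 1) := by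
  have hE := hro.regularNoncrossing
  refine ⟨fun l₁ l₂ h₁ h₂ s hs₁ hs₂ => ?_, fun l hl => ?_⟩
  · have hn₁ := List.length_pos_iff.2 h₁.1
    have hn₂ := List.length_pos_iff.2 h₂.1
    obtain ⟨k, hk⟩ := isRotated_of_rightUnique rightUnique_cycleStep hn₁ hn₂ h₁.2.1 h₂.2.1
      (h₁.cycleStep hE hn₁) (h₂.cycleStep hE hn₂) hs₁ hs₂
    exact ⟨k, hk.symm⟩
  · have hn := List.length_pos_iff.2 hl.1
    obtain ⟨y, hdec, hlt⟩ := exists_decreasesOnly_of_forall_cycleStep (hl.cycleStep hE hn)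
      fun _ hm h => hl.length_le_of_cyclicGet_eq hn hm h
    have hle := (regularNoncrossing_and_length_le_of_reflTransGen hE
      (hl.2.2.1 _ (cyclicGet_mem hn 0))).2
    exact ⟨⟨y, (forall_get_iff_forall_cyclicGet hn
      fun a b => ∀ v v', CStep (a, v) (b, v') → DecreasesOnly y v v').2 hdec⟩, by omega⟩

/-- For a regular-oriented word equation `E`, the control
structure of `CA(E)` is flat: every control state lies on at most one simple
cycle (any two simple cycles through a common state are rotations of each
other).  Moreover, every simple cycle is 1-variable-reducing: there is a
single variable `y` such that every counter transition along the cycle is a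
`DEC_y` or `SUB_{y,z}` update, i.e. it strictly decreases the counter `y` and
leaves all other counters unchanged; and the length of every simple cycle is
at most `max (|L|, |R|) - 1` where `E` is `L = R`. -/
theorem regularOriented_flat
    [Finite A] [Finite V] [DecidableEq A] [DecidableEq V]
    (E : Equation A V) (hro : RegularOriented E) :
    (∀ l₁ l₂ : List (Equation A V),
        IsSimpleCycle E l₁ → IsSimpleCycle E l₂ →
        ∀ s, s ∈ l₁ → s ∈ l₂ → ∃ k, l₂ = l₁.rotate k) ∧
    (∀ l : List (Equation A V), IsSimpleCycle E l →
        (∃ y : V, ∀ (i : Fin l.length) (v v' : V → ℕ),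
            CStep (l.get i, v)
              (l.get ⟨((i : ℕ) + 1) % l.length, Nat.mod_lt _ i.pos⟩, v') →
              v' y < v y ∧ ∀ z : V, z ≠ y → v' z = v z) ∧
        l.length ≤ max E.1.length E.2.length - 1) :=
  regularOriented_flat_general E hro

end WordEq
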